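/- arXiv:1705.04360 — 5 statements merged into one kernel-verified Lean document; each statement's English description precedes it below -/
import Mathlib

section
/- Let F be a field of characteristic not 2 and q a nondegenerate quadratic form over F. If q is a group form (i.e. D_F(q) is a subgroup of F×), then H_F(q) = D_F(q), where H_F(q) = {a ∈ F× : q ⊥ (-a)q is isotropic}. -/
open QuadraticMap

/-- `DSet F q` is the set of nonzero values of `F` represented by the quadratic form `q`. -/
def DSet (F : Type*) [Field F] {V : Type*} [AddCommGroup V] [Module F V]
    (q : QuadraticForm F V) : Set F :=
  {a : F | a ≠ 0 ∧ ∃ v : V, q v = a}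

/-- `HSet F q` is the set of `a ∈ F×` such that `q ⊥ (-a)q` (i.e. `⟨1,-a⟩ ⊗ q`) is isotropic. -/
def HSet (F : Type*) [Field F] {V : Type*} [AddCommGroup V] [Module F V]
    (q : QuadraticForm F V) : Set F :=
  {a : F | a ≠ 0 ∧ ¬ (QuadraticMap.prod q ((-a) • q)).Anisotropic}

/-- `GSet F q` is the group of similarity factors of `q`: those `a ∈ F×` with `aq ≅ q`. -/
def GSet (F : Type*) [Field F] {V : Type*} [AddCommGroup V] [Module F V]
    (q : QuadraticForm F V) : Set F :=
  {a : F | a ≠ 0 ∧ QuadraticMap.Equivalent (a • q) q}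

/-- `q` is a group form if its set of nonzero represented values is a subgroup of `F×`. -/
def IsGroupForm (F : Type*) [Field F] {V : Type*} [AddCommGroup V] [Module F V]
    (q : QuadraticForm F V) : Prop :=
  (1 : F) ∈ DSet F q ∧ (∀ a ∈ DSet F q, ∀ b ∈ DSet F q, a * b ∈ DSet F q) ∧
    ∀ a ∈ DSet F q, a⁻¹ ∈ DSet F q

/-- `q` is round if its value set coincides with its group of similarity factors. -/
def IsRound (F : Type*) [Field F] {V : Type*} [AddCommGroup V] [Module F V]
    (q : QuadraticForm F V) : Prop :=
  DSet F q = GSet F q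

/-- Nondegeneracy of a quadratic form, via its polar form. -/
def NondegQF (F : Type*) [Field F] {V : Type*} [AddCommGroup V] [Module F V]
    (q : QuadraticForm F V) : Prop :=
  ∀ v : V, (∀ w : V, polar q v w = 0) → v = 0

/-!
An isotropic vector `(v, w)` of `q ⊥ (-a)q` means `q v = a q w` with `(v, w) ≠ 0`. If
`q w ≠ 0`, then `a = q v / q w` is a value of `q` because the values form a group; if
`q w = 0`, then `q` is isotropic, and a nondegenerate isotropic form represents everything.
Conversely, for `a = q v` the vector `(v, w)` with `q w = 1` is isotropic.
-/

section

variable {F : Type*} [Field F] {V : Type*} [AddCommGroup V] [Module F V]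

lemma prod_neg_smul_apply (q : QuadraticForm F V) (a : F) (v w : V) :
    q.prod ((-a) • q) (v, w) = q v - a * q w := by
  simp only [prod_apply, smul_apply, smul_eq_mul, neg_mul, sub_eq_add_neg]

lemma not_anisotropic_prod_neg_smul_iff (q : QuadraticForm F V) (a : F) :
    ¬ (q.prod ((-a) • q)).Anisotropic ↔ ∃ v w : V, (v, w) ≠ 0 ∧ q v = a * q w := by
  simp only [Anisotropic, not_forall, Prod.exists, prod_neg_smul_apply, sub_eq_zero,
    exists_prop]
  exact exists₂_congr fun _ _ => and_comm

/-- If `x` is isotropic and `polar q x u ≠ 0`, then `t ↦ q (t • x + u)` is affine and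
nonconstant in `t`. -/
lemma NondegQF.exists_eq_of_isotropic {q : QuadraticForm F V} (hq : NondegQF F q)
    {x : V} (hx : x ≠ 0) (hqx : q x = 0) (a : F) : ∃ v : V, q v = a := by
  obtain ⟨u, hu⟩ : ∃ u, polar q x u ≠ 0 := by
    by_contra! h
    exact hx (hq x h)
  refine ⟨((a - q u) / polar q x u) • x + u, ?_⟩
  rw [QuadraticMap.map_add ⇑q, QuadraticMap.map_smul, polar_smul_left, hqx, smul_eq_mul,
    smul_eq_mul, mul_zero, zero_add, div_mul_cancel₀ _ hu, add_sub_cancel]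

lemma IsGroupForm.div_mem {q : QuadraticForm F V} (hgroup : IsGroupForm F q) {a b : F}
    (ha : a ∈ DSet F q) (hb : b ∈ DSet F q) : a / b ∈ DSet F q :=
  div_eq_mul_inv a b ▸ hgroup.2.1 a ha _ (hgroup.2.2 b hb)

lemma DSet_subset_HSet {q : QuadraticForm F V} {w : V} (hw : q w = 1) :
    DSet F q ⊆ HSet F q := by
  rintro _ ⟨ha, v, rfl⟩
  refine ⟨ha, (not_anisotropic_prod_neg_smul_iff q _).2 ⟨v, w, ?_, by rw [hw, mul_one]⟩⟩
  rintro h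
  rw [show w = 0 from congrArg Prod.snd h, QuadraticMap.map_zero] at hw
  exact zero_ne_one hw

lemma HSet_subset_DSet {q : QuadraticForm F V} (hq : NondegQF F q)
    (hgroup : IsGroupForm F q) : HSet F q ⊆ DSet F q := by
  rintro a ⟨ha, hiso⟩
  obtain ⟨v, w, hvw, hqv⟩ := (not_anisotropic_prod_neg_smul_iff q a).1 hiso
  refine ⟨ha, ?_⟩
  by_cases hw : q w = 0
  · have hv : q v = 0 := by rw [hqv, hw, mul_zero]
    by_cases hv0 : v = 0
    · exact hq.exists_eq_of_isotropic (fun hw0 => hvw (by simp [hv0, hw0])) hw a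
    · exact hq.exists_eq_of_isotropic hv0 hv a
  · have hquot := hgroup.div_mem ⟨hqv ▸ mul_ne_zero ha hw, v, rfl⟩ ⟨hw, w, rfl⟩
    rw [hqv, mul_div_cancel_right₀ _ hw] at hquot
    exact hquot.2

end

theorem HSet_eq_DSet_of_group_form_general
    (F : Type*) [Field F]
    {V : Type*} [AddCommGroup V] [Module F V]
    (q : QuadraticForm F V) (hq : NondegQF F q)
    (hgroup : IsGroupForm F q) :
    HSet F q = DSet F q :=
  (HSet_subset_DSet hq hgroup).antisymm (DSet_subset_HSet hgroup.1.2.choose_spec)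

theorem HSet_eq_DSet_of_group_form
    (F : Type*) [Field F] (hF : (2 : F) ≠ 0)
    {V : Type*} [AddCommGroup V] [Module F V] [FiniteDimensional F V]
    (q : QuadraticForm F V) (hq : NondegQF F q) (hpos : 0 < Module.finrank F V)
    (hgroup : IsGroupForm F q) :
    HSet F q = DSet F q :=
  HSet_eq_DSet_of_group_form_general F q hq hgroup
end

section
/- Let F be a field of characteristic not 2 and q an odd-dimensional isotropic nondegenerate quadratic form over F. Then q is round if and only if F is quadratically closed (every element of F× is a square). -/
open QuadraticMap

/-! An isotropic nondegenerate form is universal: a hyperbolic pair `v, w` gives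
`q (t • v + w) = t * polar q v w + q w`, which takes every value. Hence `D(q) = F×`. On the other
hand every nonzero square `r²` is a similarity factor (via `x ↦ r • x`), and conversely a
similarity `f : a • q ≅ q` multiplies the Gram determinant by `det f ^ 2 = a ^ n`; for odd `n`
this makes `a` a square. So `G(q)` is exactly the group of nonzero squares. -/

theorem isSquare_of_isSquare_pow_of_odd {K : Type*} [Field K] {a : K} {n : ℕ} (hn : Odd n)
    (h : IsSquare (a ^ n)) : IsSquare a := by
  rcases eq_or_ne a 0 with rfl | ha
  · exact IsSquare.zero
  obtain ⟨k, rfl⟩ := hn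
  have : a = a ^ (2 * k + 1) / (a ^ k) ^ 2 := by field_simp; ring
  rw [this]
  exact h.div (IsSquare.sq _)

namespace QuadraticMap

variable {F V : Type*} [Field F] [AddCommGroup V] [Module F V]

theorem exists_map_eq_of_isotropic_of_polar_ne_zero {q : QuadraticForm F V} {v w : V}
    (hv : q v = 0) (hvw : polar q v w ≠ 0) (a : F) : ∃ u, q u = a := by
  refine ⟨((a - q w) / polar q v w) • v + w, ?_⟩
  rw [QuadraticMap.map_add q, QuadraticMap.map_smul, polar_smul_left, hv, smul_zero, smul_eq_mul,
    div_mul_cancel₀ _ hvw]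
  ring

theorem exists_map_eq_of_nondeg_of_not_anisotropic {q : QuadraticForm F V} (hq : NondegQF F q)
    (hiso : ¬ q.Anisotropic) (a : F) : ∃ u, q u = a := by
  simp only [Anisotropic, not_forall] at hiso
  obtain ⟨v, hv, hv0⟩ := hiso
  obtain ⟨w, hvw⟩ : ∃ w, polar q v w ≠ 0 := by
    by_contra! h
    exact hv0 (hq v h)
  exact exists_map_eq_of_isotropic_of_polar_ne_zero hv hvw a

theorem equivalent_smul_self_of_isSquare (q : QuadraticForm F V) {a : F} (ha : a ≠ 0)
    (hsq : IsSquare a) : (a • q).Equivalent q := by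
  obtain ⟨r, rfl⟩ := hsq
  have hr : r ≠ 0 := by rintro rfl; simp at ha
  refine ⟨{ toLinearEquiv := LinearEquiv.smulOfNeZero F V r hr, map_app' := fun m => ?_ }⟩
  show q (r • m) = ((r * r) • q) m
  rw [QuadraticMap.map_smul, smul_apply]

theorem polarBilin_compl₁₂_of_isometryEquiv_smul {q : QuadraticForm F V} {a : F}
    (f : (a • q).IsometryEquiv q) :
    q.polarBilin.compl₁₂ (f : V →ₗ[F] V) (f : V →ₗ[F] V) = a • q.polarBilin := by
  ext x y
  simp only [LinearMap.compl₁₂_apply, LinearMap.smul_apply, polarBilin_apply_apply,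
    LinearEquiv.coe_coe, IsometryEquiv.coe_toLinearEquiv, polar, ← map_add, f.map_app,
    smul_apply, smul_eq_mul]
  ring

theorem isSquare_pow_finrank_of_equivalent_smul [FiniteDimensional F V] {q : QuadraticForm F V}
    (hq : NondegQF F q) {a : F} (h : (a • q).Equivalent q) :
    IsSquare (a ^ Module.finrank F V) := by
  obtain ⟨f⟩ := h
  let b := Module.finBasis F V
  set P := LinearMap.toMatrix₂ b b q.polarBilin
  set M := LinearMap.toMatrix b b (f : V →ₗ[F] V)
  have hP : P.det ≠ 0 :=
    (LinearMap.separatingLeft_iff_det_ne_zero b).mp fun x hx => hq x fun w => by simpa using hx w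
  have hdet : M.det * M.det * P.det = a ^ Module.finrank F V * P.det := by
    have := congrArg (fun B => (LinearMap.toMatrix₂ b b B).det)
      (polarBilin_compl₁₂_of_isometryEquiv_smul f)
    rw [LinearMap.toMatrix₂_compl₁₂ b b b b, _root_.map_smul, Matrix.det_mul, Matrix.det_mul,
      Matrix.det_transpose, Matrix.det_smul, Fintype.card_fin] at this
    linear_combination this
  exact ⟨M.det, (mul_right_cancel₀ hP hdet).symm⟩

end QuadraticMap

theorem odd_isotropic_round_iff_quadratically_closed_general
    (F : Type*) [Field F]
    {V : Type*} [AddCommGroup V] [Module F V] [FiniteDimensional F V]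
    (q : QuadraticForm F V) (hq : NondegQF F q)
    (hodd : Odd (Module.finrank F V)) (hiso : ¬ q.Anisotropic) :
    IsRound F q ↔ ∀ a : F, a ≠ 0 → IsSquare a := by
  have hrep (a : F) : ∃ v, q v = a := exists_map_eq_of_nondeg_of_not_anisotropic hq hiso a
  constructor
  · intro hround a ha
    obtain ⟨-, hsim⟩ : a ∈ GSet F q := hround ▸ ⟨ha, hrep a⟩
    exact isSquare_of_isSquare_pow_of_odd hodd (isSquare_pow_finrank_of_equivalent_smul hq hsim)
  · intro hsq
    ext a
    exact ⟨fun ⟨ha, _⟩ => ⟨ha, equivalent_smul_self_of_isSquare q ha (hsq a ha)⟩,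
      fun ⟨ha, _⟩ => ⟨ha, hrep a⟩⟩

theorem odd_isotropic_round_iff_quadratically_closed
    (F : Type*) [Field F] (hF : (2 : F) ≠ 0)
    {V : Type*} [AddCommGroup V] [Module F V] [FiniteDimensional F V]
    (q : QuadraticForm F V) (hq : NondegQF F q)
    (hodd : Odd (Module.finrank F V)) (hiso : ¬ q.Anisotropic) :
    IsRound F q ↔ ∀ a : F, a ≠ 0 → IsSquare a :=
  odd_isotropic_round_iff_quadratically_closed_general F q hq hodd hiso
end

section
/- Let F be a field of characteristic not 2 and q an odd-dimensional round nondegenerate quadratic form over F. Then q is isometric to (2r+1) × ⟨1⟩ for some nonnegative integer r, i.e. q is isometric to the sum-of-squares form of its dimension. -/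
open QuadraticMap

/-
Diagonalise `q ≅ ⟨w₁, …, wₙ⟩`. Each `wᵢ` is a value of `q`, so by roundness a similarity factor:
`wᵢ q ≅ q`. Comparing discriminants in a fixed basis gives `wᵢⁿ d = (det g)² d` with `d ≠ 0`, so
`wᵢⁿ` is a square, and since `n` is odd so is `wᵢ`. Rescaling the diagonal basis by square roots
of the `wᵢ` turns `q` into `n × ⟨1⟩`.
-/

theorem NondegQF.separatingLeft_associated {F : Type*} [Field F] [Invertible (2 : F)]
    {V : Type*} [AddCommGroup V] [Module F V] {q : QuadraticForm F V} (hq : NondegQF F q) :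
    (associated (R := F) q).SeparatingLeft := fun v hv ↦ hq v fun w ↦ by
  have h2 := congrArg (fun B ↦ B v w) (two_nsmul_associated F q)
  simp only [LinearMap.smul_apply, hv w, smul_zero, polarBilin_apply_apply] at h2
  exact h2.symm

theorem IsSquare.of_pow_odd {α : Type*} [CommGroupWithZero α] {a : α} {n : ℕ} (hn : Odd n)
    (h : IsSquare (a ^ n)) : IsSquare a := by
  obtain ⟨r, rfl⟩ := hn
  obtain ⟨b, hb⟩ := h
  rcases eq_or_ne a 0 with rfl | ha
  · exact ⟨0, by simp⟩
  refine ⟨b / a ^ r, ?_⟩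
  rw [div_mul_div_comm, ← hb, pow_succ, two_mul, pow_add,
    mul_div_cancel_left₀ _ (mul_ne_zero (pow_ne_zero r ha) (pow_ne_zero r ha))]

theorem QuadraticMap.weightedSumSquares_apply_single {R ι S : Type*} [CommSemiring R] [Fintype ι]
    [DecidableEq ι] [Monoid S] [DistribMulAction S R] [SMulCommClass S R R] (w : ι → S) (i : ι)
    (x : R) : weightedSumSquares R w (Pi.single i x) = w i • (x * x) := by
  rw [weightedSumSquares_apply, Finset.sum_eq_single i] <;> simp_all

namespace QuadraticForm

variable {R M : Type*} [CommRing R] [IsDomain R] [Invertible (2 : R)]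
  [AddCommGroup M] [Module R M] [Module.Free R M] [Module.Finite R M]

theorem isSquare_pow_finrank_of_equivalent_smul {Q : QuadraticForm R M}
    (hQ : (associated (R := R) Q).SeparatingLeft) {a : R} (h : Equivalent (a • Q) Q) :
    IsSquare (a ^ Module.finrank R M) := by
  obtain ⟨g⟩ := h
  let b := Module.finBasis R M
  have hcomp : Q.comp (g.toLinearEquiv : M →ₗ[R] M) = a • Q := by
    ext v; exact g.map_app v
  have hdiscr := congrArg (discr b) hcomp
  rw [discr_comp b, discr_smul, Fintype.card_fin] at hdiscr
  have hne : Q.discr b ≠ 0 := (LinearMap.separatingLeft_iff_det_ne_zero b).mp hQ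
  exact ⟨_, (mul_right_cancel₀ hne hdiscr).symm⟩

end QuadraticForm

section Field

variable {F : Type*} [Field F] {V : Type*} [AddCommGroup V] [Module F V] {ι : Type*} [Fintype ι]

theorem coe_mem_DSet_of_equivalent_weightedSumSquares [DecidableEq ι] {q : QuadraticForm F V}
    {w : ι → Fˣ} (h : Equivalent q (weightedSumSquares F w)) (i : ι) : (w i : F) ∈ DSet F q := by
  obtain ⟨e⟩ := h
  refine ⟨(w i).ne_zero, e.symm (Pi.single i 1), ?_⟩
  rw [e.symm.map_app, weightedSumSquares_apply_single]
  simp [Units.smul_def]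

theorem QuadraticForm.equivalent_weightedSumSquares_one_of_isSquare {w : ι → Fˣ}
    (hw : ∀ i, IsSquare (w i : F)) :
    Equivalent (weightedSumSquares F w) (weightedSumSquares F fun _ : ι ↦ (1 : F)) := by
  choose c hc using hw
  have hc0 : ∀ i, c i ≠ 0 := fun i h0 ↦ (w i).ne_zero (by simp [hc, h0])
  have hone : weightedSumSquares F (1 : ι → Fˣ) = weightedSumSquares F fun _ : ι ↦ (1 : F) := by
    ext v
    simp [weightedSumSquares_apply]
  exact hone ▸ ⟨isometryEquivWeightedSumSquaresWeightedSumSquares (w' := 1)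
    (fun i ↦ toUnits (Units.mk0 (c i) (hc0 i))) fun i ↦ Units.ext (by simp [hc, pow_two])⟩

end Field

theorem odd_round_is_sum_of_squares_form
    (F : Type*) [Field F] (hF : (2 : F) ≠ 0)
    {V : Type*} [AddCommGroup V] [Module F V] [FiniteDimensional F V]
    (q : QuadraticForm F V) (hq : NondegQF F q)
    (hodd : Odd (Module.finrank F V)) (hround : IsRound F q) :
    ∃ r : ℕ, Module.finrank F V = 2 * r + 1 ∧
      QuadraticMap.Equivalent q
        (QuadraticMap.weightedSumSquares F (fun _ : Fin (2 * r + 1) => (1 : F))) := by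
  let : Invertible (2 : F) := invertibleOfNonzero hF
  have hsep := hq.separatingLeft_associated
  obtain ⟨w, hw⟩ := q.equivalent_weightedSumSquares_units_of_nondegenerate' hsep
  have hsimilar : ∀ i, Equivalent ((w i : F) • q) q := fun i ↦
    (hround ▸ coe_mem_DSet_of_equivalent_weightedSumSquares hw i : (w i : F) ∈ GSet F q).2
  have hsquare : ∀ i, IsSquare (w i : F) := fun i ↦
    (QuadraticForm.isSquare_pow_finrank_of_equivalent_smul hsep (hsimilar i)).of_pow_odd hodd
  obtain ⟨r, hr⟩ := hodd
  exact ⟨r, hr,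
    hr ▸ hw.trans (QuadraticForm.equivalent_weightedSumSquares_one_of_isSquare hsquare)⟩
end

section
/- Let F be a field of characteristic not 2. The quadratic form (2n+1) × ⟨1⟩ is round over F for every nonnegative integer n if and only if F is Pythagorean (every sum of two squares in F is a square). -/
open QuadraticMap

/-! If `F` is Pythagorean, every value of a sum of squares `q` is a square `d²`, and
`v ↦ d • v` is a similarity of `q` with factor `d²`; conversely a similarity `c • q ≅ q` maps
a vector of value `1` to one of value `c`. If `⟨1, 1, 1⟩` is round, then `c = a² + b²` is a
similarity factor, and comparing discriminants of `c • q ≅ q` gives `c³ = (det f)²`, so `c` is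
a square. -/

theorem isSquare_of_pow_odd_eq_mul_self {F : Type*} [Field F] {c d : F} {k : ℕ}
    (h : c ^ (2 * k + 1) = d * d) : IsSquare c := by
  rcases eq_or_ne c 0 with rfl | hc
  · exact IsSquare.zero
  refine ⟨d / c ^ k, ?_⟩
  field_simp
  linear_combination h

theorem isSquare_sum_mul_self_of_pythagorean {R : Type*} [CommSemiring R]
    (pyth : ∀ a b : R, IsSquare (a ^ 2 + b ^ 2)) {ι : Type*} (s : Finset ι) (f : ι → R) :
    IsSquare (∑ i ∈ s, f i * f i) :=
  Finset.sum_induction _ IsSquare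
    (by rintro _ _ ⟨x, rfl⟩ ⟨y, rfl⟩; simpa only [pow_two] using pyth x y)
    IsSquare.zero fun i _ => IsSquare.mul_self (f i)

theorem QuadraticMap.equivalent_mul_self_smul {K V N : Type*} [Field K] [AddCommGroup V]
    [Module K V] [AddCommGroup N] [Module K N] (Q : QuadraticMap K V N) {d : K} (hd : d ≠ 0) :
    ((d * d) • Q).Equivalent Q :=
  ⟨{ LinearEquiv.smulOfNeZero K V d hd with map_app' := fun v => Q.map_smul d v }⟩

namespace QuadraticForm

section Discriminant

variable {R : Type*} [CommRing R] [Invertible (2 : R)] {ι : Type*} [Fintype ι] [DecidableEq ι]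

theorem toMatrix'_weightedSumSquares (w : ι → R) :
    toMatrix' (weightedSumSquares R w) = Matrix.diagonal w := by
  ext i j
  by_cases hij : i = j <;>
    simp [toMatrix', LinearMap.toMatrix₂'_apply, weightedSumSquares, proj, map_sum,
      Pi.single_apply, hij, eq_comm]

theorem discr'_weightedSumSquares (w : ι → R) :
    discr' (weightedSumSquares R w) = ∏ i, w i := by
  rw [discr', toMatrix'_weightedSumSquares, Matrix.det_diagonal]

end Discriminant

variable {F : Type*} [Field F] [Invertible (2 : F)] {ι : Type*} [Fintype ι] [DecidableEq ι]

theorem isSquare_of_equivalent_smul_self {Q : QuadraticForm F (ι → F)} (hQ : Q.discr' ≠ 0)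
    (hι : Odd (Fintype.card ι)) {c : F} (h : (c • Q).Equivalent Q) : IsSquare c := by
  obtain ⟨k, hk⟩ := hι
  obtain ⟨f⟩ := h
  have hcomp : c • Q = Q.comp (f.toLinearEquiv : (ι → F) →ₗ[F] ι → F) :=
    QuadraticMap.ext fun v => (f.map_app v).symm
  have hdiscr := congrArg discr' hcomp
  rw [discr'_smul, discr'_comp, hk] at hdiscr
  exact isSquare_of_pow_odd_eq_mul_self (mul_right_cancel₀ hQ hdiscr)

end QuadraticForm

section Roundness

variable {F : Type*} [Field F] {V : Type*} [AddCommGroup V] [Module F V] {q : QuadraticForm F V}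

theorem GSet_subset_DSet (h1 : ∃ v, q v = 1) : GSet F q ⊆ DSet F q := by
  rintro a ⟨ha, ⟨f⟩⟩
  obtain ⟨v, hv⟩ := h1
  refine ⟨ha, f v, ?_⟩
  rw [f.map_app, smul_apply, hv, smul_eq_mul, mul_one]

theorem DSet_subset_GSet (hsq : ∀ v, IsSquare (q v)) : DSet F q ⊆ GSet F q := by
  rintro a ⟨ha, v, rfl⟩
  obtain ⟨d, hd⟩ := hsq v
  refine ⟨ha, hd ▸ q.equivalent_mul_self_smul ?_⟩
  rintro rfl
  simp [hd] at ha

theorem isRound_of_forall_isSquare (h1 : ∃ v, q v = 1) (hsq : ∀ v, IsSquare (q v)) :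
    IsRound F q :=
  (DSet_subset_GSet hsq).antisymm (GSet_subset_DSet h1)

end Roundness

section SumsOfSquares

variable {F : Type*} [Field F] {ι : Type*} [Fintype ι]

theorem isSquare_sq_add_sq_of_isRound [Invertible (2 : F)] [DecidableEq ι]
    (hι : Odd (Fintype.card ι)) {i j : ι} (hij : i ≠ j)
    (hround : IsRound F (weightedSumSquares F fun _ : ι => (1 : F)))
    (a b : F) : IsSquare (a ^ 2 + b ^ 2) := by
  rcases eq_or_ne (a ^ 2 + b ^ 2) 0 with h0 | hne
  · exact h0 ▸ IsSquare.zero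
  have hval : weightedSumSquares F (fun _ : ι => (1 : F)) (Pi.single i a + Pi.single j b) =
      a ^ 2 + b ^ 2 := by
    rw [weightedSumSquares_apply, Fintype.sum_eq_add i j hij fun k hk => by simp [hk.1, hk.2]]
    simp [hij, hij.symm, pow_two]
  have hG : a ^ 2 + b ^ 2 ∈ GSet F (weightedSumSquares F fun _ : ι => (1 : F)) :=
    hround ▸ ⟨hne, _, hval⟩
  exact QuadraticForm.isSquare_of_equivalent_smul_self
    (by simp [QuadraticForm.discr'_weightedSumSquares]) hι hG.2

theorem isRound_weightedSumSquares_one_of_pythagorean [Nonempty ι]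
    (pyth : ∀ a b : F, IsSquare (a ^ 2 + b ^ 2)) :
    IsRound F (weightedSumSquares F fun _ : ι => (1 : F)) := by
  classical
  refine isRound_of_forall_isSquare ⟨Pi.single (Classical.arbitrary ι) 1, ?_⟩ fun v => ?_
  · simp [Pi.single_apply]
  · simpa using isSquare_sum_mul_self_of_pythagorean pyth Finset.univ v

end SumsOfSquares

theorem odd_sum_of_squares_round_iff_pythagorean
    (F : Type*) [Field F] (hF : (2 : F) ≠ 0) :
    (∀ n : ℕ, IsRound F
        (QuadraticMap.weightedSumSquares F (fun _ : Fin (2 * n + 1) => (1 : F)))) ↔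
      ∀ a b : F, IsSquare (a ^ 2 + b ^ 2) := by
  have : Invertible (2 : F) := invertibleOfNonzero hF
  exact ⟨fun hround => isSquare_sq_add_sq_of_isRound (ι := Fin 3) (by decide) (i := 0) (j := 1)
    (by decide) (hround 1), fun pyth _ => isRound_weightedSumSquares_one_of_pythagorean pyth⟩
end

section
/- Let F be a field of characteristic not 2 and q an anisotropic nondegenerate quadratic form over F. Then q remains anisotropic over the Laurent series field F((x)). -/
open QuadraticMap

/-- Base change (scalar extension) of a quadratic form on `Fin n → F` along `F → K`,
given by extending the Gram matrix. -/
noncomputable def baseChangeFin {F : Type*} [Field F] [Invertible (2 : F)]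
    (K : Type*) [Field K] [Algebra F K] {n : ℕ} (q : QuadraticForm F (Fin n → F)) :
    QuadraticForm K (Fin n → K) :=
  ((QuadraticForm.toMatrix' q).map (algebraMap F K)).toQuadraticForm'

/-
Write a nonzero isotropic vector `v` over `F((x))` and let `d` be the least order of its
coordinates. In `q v = 0`, the coefficient of `x ^ (d + d)` only receives contributions from the
coefficients of the `v i` at `x ^ d`, and equals `q a` for the vector `a` of these coefficients.
So `q a = 0` with `a ≠ 0`.
-/

namespace HahnSeries

variable {Γ R : Type*}

theorem coeff_mul_add_of_forall_lt_coeff_eq_zero [AddCommMonoid Γ] [LinearOrder Γ]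
    [IsOrderedCancelAddMonoid Γ] [NonUnitalNonAssocSemiring R] {x y : HahnSeries Γ R} {a b : Γ}
    (hx : ∀ g < a, x.coeff g = 0) (hy : ∀ g < b, y.coeff g = 0) :
    (x * y).coeff (a + b) = x.coeff a * y.coeff b := by
  rw [coeff_mul]
  refine Finset.sum_eq_single (a, b) ?_ fun hab => ?_
  · rintro ⟨k, l⟩ hkl hne
    obtain ⟨hk, hl, hsum⟩ := Finset.mem_antidiagonal.mp hkl
    have hak : a ≤ k := not_lt.mp fun h => hk (hx k h)
    have hbl : b ≤ l := not_lt.mp fun h => hl (hy l h)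
    obtain ⟨rfl, rfl⟩ := (add_eq_add_iff_eq_and_eq hak hbl).mp hsum.symm
    exact absurd rfl hne
  · by_contra h
    exact hab (Finset.mem_antidiagonal.mpr
      ⟨left_ne_zero_of_mul h, right_ne_zero_of_mul h, rfl⟩)

theorem exists_coeff_ne_zero_and_forall_lt_coeff_eq_zero [LinearOrder Γ] [Zero R]
    {ι : Type*} [Finite ι] {v : ι → HahnSeries Γ R} (hv : v ≠ 0) :
    ∃ d : Γ, (∃ i, (v i).coeff d ≠ 0) ∧ ∀ i, ∀ g < d, (v i).coeff g = 0 := by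
  obtain ⟨j, hvj⟩ := Function.ne_iff.mp hv
  have : Nonempty ι := ⟨j⟩
  obtain ⟨i, hmin⟩ := Finite.exists_min fun i => (v i).orderTop
  have hvi : v i ≠ 0 := by
    rintro h
    refine hvj (orderTop_eq_top.mp (top_le_iff.mp ?_))
    simpa [h] using hmin j
  obtain ⟨d, hd⟩ := WithTop.ne_top_iff_exists.mp (orderTop_ne_top.mpr hvi)
  exact ⟨d, ⟨i, coeff_orderTop_ne hd.symm⟩, fun k g hg =>
    coeff_eq_zero_of_lt_orderTop ((WithTop.coe_lt_coe.mpr hg).trans_le (hd ▸ hmin k))⟩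

end HahnSeries

namespace Matrix

variable {ι R Γ : Type*} [Fintype ι] [DecidableEq ι] [CommRing R]

theorem toQuadraticForm'_apply (M : Matrix ι ι R) (x : ι → R) :
    M.toQuadraticForm' x = ∑ i, ∑ j, x i * x j * M i j := by
  simp only [toQuadraticForm', LinearMap.BilinMap.toQuadraticMap_apply, toLinearMap₂'_apply,
    smul_eq_mul, mul_assoc]

variable [AddCommMonoid Γ] [LinearOrder Γ] [IsOrderedCancelAddMonoid Γ]

theorem coeff_toQuadraticForm'_map_C_apply (M : Matrix ι ι R) {v : ι → HahnSeries Γ R} {d : Γ}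
    (hv : ∀ i, ∀ g < d, (v i).coeff g = 0) :
    ((M.map HahnSeries.C).toQuadraticForm' v).coeff (d + d) =
      M.toQuadraticForm' fun i => (v i).coeff d := by
  simp only [toQuadraticForm'_apply, HahnSeries.coeff_sum, map_apply, HahnSeries.C_apply,
    HahnSeries.coeff_mul_single_zero,
    HahnSeries.coeff_mul_add_of_forall_lt_coeff_eq_zero (hv _) (hv _)]

theorem anisotropic_toQuadraticForm'_map_C {M : Matrix ι ι R}
    (hM : M.toQuadraticForm'.Anisotropic) :
    (M.map (HahnSeries.C (Γ := Γ))).toQuadraticForm'.Anisotropic := by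
  intro v hv
  by_contra hne
  obtain ⟨d, ⟨i, hi⟩, hlow⟩ := HahnSeries.exists_coeff_ne_zero_and_forall_lt_coeff_eq_zero hne
  have hlead : M.toQuadraticForm' (fun j => (v j).coeff d) = 0 := by
    rw [← coeff_toQuadraticForm'_map_C_apply M hlow, hv, HahnSeries.coeff_zero]
  exact hi (congrFun (hM _ hlead) i)

end Matrix

theorem QuadraticForm.toQuadraticForm'_toMatrix' {R ι : Type*} [CommRing R] [Invertible (2 : R)]
    [Fintype ι] [DecidableEq ι] (Q : QuadraticForm R (ι → R)) :
    Q.toMatrix'.toQuadraticForm' = Q := by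
  rw [Matrix.toQuadraticForm', QuadraticForm.toMatrix', Matrix.toLinearMap₂'_toMatrix']
  exact QuadraticMap.toQuadraticMap_associated R Q

/-- The `F`-algebra structure on `F((x))` is inherited from `F⟦X⟧` and differs from that of a
general Hahn series ring, so we pass to `HahnSeries.C` explicitly. -/
theorem baseChangeFin_laurentSeries {F : Type*} [Field F] [Invertible (2 : F)] {n : ℕ}
    (q : QuadraticForm F (Fin n → F)) :
    baseChangeFin (LaurentSeries F) q = (q.toMatrix'.map HahnSeries.C).toQuadraticForm' := by
  rw [baseChangeFin]
  congr 2
  exact funext (LaurentSeries.algebraMap_apply F)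

theorem anisotropic_baseChange_laurentSeries_general
    (F : Type*) [Field F] [Invertible (2 : F)]
    {n : ℕ} (q : QuadraticForm F (Fin n → F))
    (han : q.Anisotropic) :
    (baseChangeFin (LaurentSeries F) q).Anisotropic := by
  rw [← QuadraticForm.toQuadraticForm'_toMatrix' q] at han
  rw [baseChangeFin_laurentSeries]
  exact Matrix.anisotropic_toQuadraticForm'_map_C han

theorem anisotropic_baseChange_laurentSeries
    (F : Type*) [Field F] [Invertible (2 : F)]
    {n : ℕ} (q : QuadraticForm F (Fin n → F)) (hq : NondegQF F q)
    (han : q.Anisotropic) :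
    (baseChangeFin (LaurentSeries F) q).Anisotropic :=
  anisotropic_baseChange_laurentSeries_general F q han
end
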